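/- Let F be a finite field with p^f > 3 elements, q an odd prime dividing p^f - 1, and B = ⟨b⟩ cyclic of order q. The unitary subgroup V₋(FB) = {u ∈ V(FB) : u* = u^{-1}} has order (p^f - 1)^((q-1)/2), and is isomorphic to the direct product of (q-1)/2 copies of the cyclic group of order p^f - 1. -/

import Mathlib

open MonoidAlgebra

noncomputable def aug (F : Type*) [CommSemiring F] (G : Type*) [Monoid G] :
    MonoidAlgebra F G →ₐ[F] F := MonoidAlgebra.lift F F G 1

noncomputable def invo (F : Type*) [CommSemiring F] (G : Type*) [Group G] :
    MonoidAlgebra F G → MonoidAlgebra F G := fun x => MonoidAlgebra.mapDomain (·⁻¹) x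

noncomputable def normUnits (F : Type*) [CommSemiring F] (G : Type*) [Monoid G] :
    Subgroup (MonoidAlgebra F G)ˣ :=
  (Units.map (aug F G : MonoidAlgebra F G →* F)).ker

noncomputable def grpUnit (F : Type*) [CommSemiring F] (G : Type*) [Group G] :
    G →* (MonoidAlgebra F G)ˣ where
  toFun g :=
    { val := MonoidAlgebra.of F G g
      inv := MonoidAlgebra.of F G g⁻¹
      val_inv := by rw [← map_mul, mul_inv_cancel, map_one]
      inv_val := by rw [← map_mul, inv_mul_cancel, map_one] }
  map_one' := Units.ext (map_one (MonoidAlgebra.of F G))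
  map_mul' g h := Units.ext (map_mul (MonoidAlgebra.of F G) g h)

/-!
Since `q ∣ |F| - 1`, a faithful character `χ : B →* Fˣ` exists, and its powers `χ ^ k`,
`k : ZMod q`, are `q` distinct characters of `B`. By Dedekind's independence of characters,
evaluation at them is an `F`-algebra isomorphism `FB ≅ F ^ q`. It turns the augmentation into
the coordinate `k = 0` and the involution `*` into the permutation `k ↦ -k` of coordinates, so
`V₋(FB)` corresponds to the tuples `v : ZMod q → Fˣ` with `v 0 = 1` and `v (-k) = (v k)⁻¹`.
Such a tuple is freely determined by its values at `k = 1, …, (q - 1) / 2`, and `Fˣ` is cyclic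
of order `p ^ f - 1`.
-/

section Characters

lemma pow_val_neg {G : Type*} [Group G] {x : G} {n : ℕ} [NeZero n] (hx : x ^ n = 1)
    (k : ZMod n) : x ^ (-k).val = (x ^ k.val)⁻¹ := by
  rw [eq_inv_iff_mul_eq_one, ← pow_add, pow_eq_pow_mod _ hx, ← ZMod.val_add, neg_add_cancel,
    ZMod.val_zero, pow_zero]

lemma pow_val_injective {M : Type*} [LeftCancelMonoid M] {x : M} {n : ℕ} [NeZero n]
    (hx : orderOf x = n) : Function.Injective fun k : ZMod n => x ^ k.val := by
  intro k l hkl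
  have hmod := pow_inj_mod.1 hkl
  rw [hx, Nat.mod_eq_of_lt k.val_lt, Nat.mod_eq_of_lt l.val_lt] at hmod
  exact ZMod.val_injective n hmod

lemma exists_injective_monoidHom_of_natCard_dvd {B G : Type*} [Group B] [IsCyclic B] [Group G]
    [IsCyclic G] [Finite G] (h : Nat.card B ∣ Nat.card G) :
    ∃ χ : B →* G, Function.Injective χ := by
  obtain ⟨g, hg⟩ := IsCyclic.exists_ofOrder_eq_natCard (α := G)
  have hx : orderOf (g ^ (Nat.card G / Nat.card B)) = Nat.card B := by
    rw [← hg]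
    exact orderOf_pow_orderOf_div (hg ▸ Nat.card_pos.ne') (hg ▸ h)
  let e : B ≃* Subgroup.zpowers (g ^ (Nat.card G / Nat.card B)) :=
    mulEquivOfCyclicCardEq (by rw [Nat.card_zpowers, hx])
  exact ⟨(Subgroup.subtype _).comp e.toMonoidHom, Subtype.val_injective.comp e.injective⟩

variable {B G : Type*} [Group B] [CommGroup G] {n : ℕ}

def powChar (χ : B →* G) (k : ZMod n) : B →* G :=
  (powMonoidHom k.val).comp χ

@[simp]
lemma powChar_apply (χ : B →* G) (k : ZMod n) (b : B) : powChar χ k b = χ b ^ k.val :=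
  rfl

lemma powChar_zero (χ : B →* G) : powChar χ (0 : ZMod n) = 1 := by
  ext b
  simp

variable [NeZero n]

lemma powChar_neg_apply (χ : B →* G) (hB : Nat.card B = n) (k : ZMod n) (b : B) :
    powChar χ (-k) b = (powChar χ k b)⁻¹ := by
  have hb : χ b ^ n = 1 := by rw [← map_pow, ← hB, pow_card_eq_one', map_one]
  simpa using pow_val_neg hb k

lemma powChar_injective {χ : B →* G} (hχ : Function.Injective χ) {g : B} (hg : orderOf g = n) :
    Function.Injective (powChar χ : ZMod n → B →* G) := fun _ _ hkl =>
  pow_val_injective ((orderOf_injective χ hχ g).trans hg) (DFunLike.congr_fun hkl g)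

end Characters

section CharEval

variable {F : Type*} [Field F] {B : Type*} [Group B] {ι : Type*}

noncomputable def charEval (ψ : ι → B →* Fˣ) : MonoidAlgebra F B →ₐ[F] (ι → F) :=
  AlgHom.pi fun i => lift F F B ((Units.coeHom F).comp (ψ i))

lemma charEval_single (ψ : ι → B →* Fˣ) (b : B) (r : F) (i : ι) :
    charEval ψ (single b r) i = r * ψ i b := by
  simp [charEval, lift_single, smul_eq_mul]

lemma charEval_apply [Fintype B] (ψ : ι → B →* Fˣ) (x : MonoidAlgebra F B) (i : ι) :
    charEval ψ x i = ∑ b, x.coeff b * ψ i b := by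
  simp [charEval, lift_apply, smul_eq_mul, Finsupp.sum_fintype]

lemma charEval_eq_aug (ψ : ι → B →* Fˣ) {i : ι} (hi : ψ i = 1) (x : MonoidAlgebra F B) :
    charEval ψ x i = aug F B x := by
  simp [charEval, aug, hi]

lemma charEval_invo (ψ : ι → B →* Fˣ) {i j : ι} (hij : ∀ b, ψ j b = (ψ i b)⁻¹)
    (x : MonoidAlgebra F B) : charEval ψ (invo F B x) i = charEval ψ x j := by
  induction x using MonoidAlgebra.induction_linear with
  | zero => simp [invo]
  | add x y hx hy => simp_all [invo, mapDomain_add]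
  | single b r => simp [invo, mapDomain_single, charEval_single, hij]

theorem charEval_bijective [Fintype B] [Fintype ι] [DecidableEq ι] (ψ : ι → B →* Fˣ)
    (hψ : Function.Injective ψ) (hcard : Fintype.card ι = Fintype.card B) :
    Function.Bijective (charEval ψ) := by
  let σ := Fintype.equivOfCardEq hcard
  let N : Matrix ι ι F := fun i j => ψ i (σ j)
  have hN : IsUnit N := by
    rw [← Matrix.linearIndependent_rows_iff_isUnit]
    have hDedekind := (linearIndependent_monoidHom B F).comp (fun i => (Units.coeHom F).comp (ψ i))
      fun i j h => hψ ((MonoidHom.cancel_left (g := Units.coeHom F) Units.val_injective).1 h)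
    exact hDedekind.map' (LinearEquiv.funCongrLeft F F σ).toLinearMap (LinearEquiv.ker _)
  let c : MonoidAlgebra F B ≃ (ι → F) :=
    (coeffEquiv.trans Finsupp.equivFunOnFinite).trans (σ.arrowCongr (Equiv.refl F)).symm
  have hfactor : ⇑(charEval ψ) = N.mulVec ∘ c := by
    ext x i
    simp only [charEval_apply, Function.comp_apply, Matrix.mulVec, dotProduct, N]
    exact (Fintype.sum_equiv σ _ _ fun j => mul_comm (N i j) _).symm
  rw [hfactor]
  have hNbij : Function.Bijective N.mulVec :=
    ⟨Matrix.mulVec_injective_iff_isUnit.2 hN, Matrix.mulVec_surjective_iff_isUnit.2 hN⟩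
  exact hNbij.comp c.bijective

end CharEval

section OddFunctions

variable (A G : Type*) [AddGroup A] [CommGroup G]

def oddFunctions : Subgroup (A → G) where
  carrier := {v | v 0 = 1 ∧ ∀ a, v (-a) = (v a)⁻¹}
  one_mem' := ⟨rfl, fun _ => inv_one.symm⟩
  mul_mem' hv hw := ⟨by simp [hv.1, hw.1], fun a => by simp [hv.2 a, hw.2 a, mul_comm]⟩
  inv_mem' hv := ⟨by simp [hv.1], fun a => by simp [hv.2 a]⟩

variable {A G}

lemma mem_oddFunctions {v : A → G} :
    v ∈ oddFunctions A G ↔ v 0 = 1 ∧ ∀ a, v (-a) = (v a)⁻¹ :=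
  Iff.rfl

structure IsNegTransversal {ι : Type*} (h : ι → A) : Prop where
  injective : Function.Injective h
  ne_neg : ∀ i j, h i ≠ -h j
  exists_eq : ∀ a ≠ 0, ∃ i, a = h i ∨ a = -h i

variable {ι : Type*} {h : ι → A}

lemma IsNegTransversal.eq_of_comp_eq (ht : IsNegTransversal h) {v w : A → G}
    (hv : v ∈ oddFunctions A G) (hw : w ∈ oddFunctions A G) (hvw : v ∘ h = w ∘ h) :
    v = w := by
  funext a
  rcases eq_or_ne a 0 with rfl | ha
  · rw [hv.1, hw.1]
  obtain ⟨i, rfl | rfl⟩ := ht.exists_eq a ha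
  · exact congr_fun hvw i
  · rw [hv.2, hw.2]
    exact congrArg _ (congr_fun hvw i)

variable [DecidableEq A]

lemma mulSingle_mul_mulSingle_neg_mem {a : A} (ha : a ≠ -a) (x : G) :
    Pi.mulSingle a x * Pi.mulSingle (-a) x⁻¹ ∈ oddFunctions A G := by
  have ha0 : a ≠ 0 := fun h => ha (by simp [h])
  refine ⟨by simp [ha0, Ne.symm ha0], fun b => ?_⟩
  simp only [Pi.mul_apply, Pi.mulSingle_apply, neg_eq_iff_eq_neg]
  split_ifs <;> simp_all [mul_comm]

variable [Fintype ι]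

def oddExtend (h : ι → A) (w : ι → G) : A → G :=
  ∏ i, Pi.mulSingle (h i) (w i) * Pi.mulSingle (-h i) (w i)⁻¹

lemma IsNegTransversal.oddExtend_mem (ht : IsNegTransversal h) (w : ι → G) :
    oddExtend h w ∈ oddFunctions A G :=
  Subgroup.prod_mem _ fun i _ => mulSingle_mul_mulSingle_neg_mem (ht.ne_neg i i) (w i)

lemma IsNegTransversal.oddExtend_apply (ht : IsNegTransversal h) (w : ι → G) (j : ι) :
    oddExtend h w (h j) = w j := by
  classical
  simp [oddExtend, Finset.prod_apply, Pi.mulSingle_apply, ht.injective.eq_iff, ht.ne_neg]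

def IsNegTransversal.oddFunctionsEquiv (ht : IsNegTransversal h) :
    oddFunctions A G ≃* (ι → G) where
  toFun v := v.1 ∘ h
  invFun w := ⟨_, ht.oddExtend_mem w⟩
  left_inv v := Subtype.ext <|
    ht.eq_of_comp_eq (ht.oddExtend_mem _) v.2 (funext (ht.oddExtend_apply _))
  right_inv w := funext (ht.oddExtend_apply w)
  map_mul' _ _ := rfl

end OddFunctions

lemma isNegTransversal_zmod (m : ℕ) :
    IsNegTransversal fun i : Fin m => ((i + 1 : ℕ) : ZMod (2 * m + 1)) := by
  refine ⟨fun i j hij => ?_, fun i j hij => ?_, fun a ha => ?_⟩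
  · have hval := congrArg ZMod.val hij
    rw [ZMod.val_natCast_of_lt (by omega), ZMod.val_natCast_of_lt (by omega)] at hval
    exact Fin.ext (by omega)
  · rw [eq_neg_iff_add_eq_zero, ← Nat.cast_add, ZMod.natCast_eq_zero_iff] at hij
    have := Nat.le_of_dvd (by omega) hij
    omega
  · have hpos := ZMod.val_pos.2 ha
    have hlt := ZMod.val_lt a
    by_cases hle : a.val ≤ m
    · refine ⟨⟨a.val - 1, by omega⟩, Or.inl ?_⟩
      simp [Nat.sub_add_cancel hpos]
    · have hneg : (-a).val = 2 * m + 1 - a.val := by rw [ZMod.neg_val, if_neg ha]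
      refine ⟨⟨(-a).val - 1, by omega⟩, Or.inr ?_⟩
      rw [← neg_eq_iff_eq_neg]
      simp [Nat.sub_add_cancel (show 1 ≤ (-a).val by omega)]

section Units

variable {F : Type*} [Field F] {B : Type*} [Group B] {ι : Type*}

noncomputable def charEvalUnits (ψ : ι → B →* Fˣ) (hψ : Function.Bijective (charEval ψ)) :
    (MonoidAlgebra F B)ˣ ≃* (ι → Fˣ) :=
  (Units.mapEquiv (AlgEquiv.ofBijective (charEval ψ) hψ).toMulEquiv).trans MulEquiv.piUnits

lemma coe_charEvalUnits_apply (ψ : ι → B →* Fˣ) (hψ : Function.Bijective (charEval ψ))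
    (u : (MonoidAlgebra F B)ˣ) (i : ι) : (charEvalUnits ψ hψ u i : F) = charEval ψ u i :=
  rfl

lemma mem_normUnits_iff (u : (MonoidAlgebra F B)ˣ) : u ∈ normUnits F B ↔ aug F B u = 1 := by
  simp [normUnits, Units.ext_iff]

theorem charEvalUnits_mem_oddFunctions_iff {A : Type*} [AddGroup A] {ψ : A → B →* Fˣ}
    (hψ0 : ψ 0 = 1) (hψneg : ∀ a b, ψ (-a) b = (ψ a b)⁻¹)
    (hψ : Function.Bijective (charEval ψ)) (u : (MonoidAlgebra F B)ˣ) :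
    charEvalUnits ψ hψ u ∈ oddFunctions A Fˣ ↔
      u ∈ normUnits F B ∧ invo F B u = ↑u⁻¹ := by
  have hinv (a : A) : (((charEvalUnits ψ hψ u a)⁻¹ : Fˣ) : F) = charEval ψ ↑u⁻¹ a := by
    rw [← coe_charEvalUnits_apply, map_inv]
    rfl
  have hneg : ∀ x a, charEval ψ x (-a) = charEval ψ (invo F B x) a := fun x a =>
    (charEval_invo _ (hψneg a) x).symm
  rw [mem_oddFunctions, mem_normUnits_iff, ← hψ.1.eq_iff, funext_iff]
  simp only [Units.ext_iff, coe_charEvalUnits_apply, Units.val_one, hinv, hneg,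
    charEval_eq_aug _ hψ0]

end Units

theorem stmt3_general (p q f : ℕ) (hqodd : Odd q)
    (F : Type*) [Field F] [Fintype F] (hF : Fintype.card F = p ^ f)
    (hdvd : q ∣ p ^ f - 1)
    (B : Type*) [Group B] [IsCyclic B] (hB : Nat.card B = q) :
    ∃ H : Subgroup (MonoidAlgebra F B)ˣ,
      (H : Set (MonoidAlgebra F B)ˣ) =
        {u | u ∈ normUnits F B ∧ invo F B (u : MonoidAlgebra F B) = ((u⁻¹ : (MonoidAlgebra F B)ˣ) : MonoidAlgebra F B)} ∧
      Nat.card H = (p ^ f - 1) ^ ((q - 1) / 2) ∧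
      Nonempty (H ≃* (Fin ((q - 1) / 2) → Multiplicative (ZMod (p ^ f - 1)))) := by
  obtain ⟨m, rfl⟩ := hqodd
  rw [show (2 * m + 1 - 1) / 2 = m by omega]
  have hcardF : Nat.card Fˣ = p ^ f - 1 := by rw [Nat.card_units, Nat.card_eq_fintype_card, hF]
  have : Finite B := Nat.finite_of_card_ne_zero (by omega)
  have := Fintype.ofFinite B
  obtain ⟨χ, hχ⟩ :=
    exists_injective_monoidHom_of_natCard_dvd (G := Fˣ) (hcardF ▸ hB ▸ hdvd)
  obtain ⟨g, hg⟩ := IsCyclic.exists_ofOrder_eq_natCard (α := B)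
  have hbij :
      Function.Bijective (charEval (F := F) (powChar χ : ZMod (2 * m + 1) → B →* Fˣ)) :=
    charEval_bijective _ (powChar_injective hχ (hg.trans hB))
      (by rw [ZMod.card, Fintype.card_eq_nat_card, hB])
  let E := charEvalUnits _ hbij
  have eF : Fˣ ≃* Multiplicative (ZMod (p ^ f - 1)) :=
    mulEquivOfCyclicCardEq (by rw [hcardF]; exact (Nat.card_zmod _).symm)
  let H := (oddFunctions (ZMod (2 * m + 1)) Fˣ).map E.symm.toMonoidHom
  have iso : H ≃* (Fin m → Multiplicative (ZMod (p ^ f - 1))) :=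
    ((E.symm.subgroupMap _).symm.trans ((isNegTransversal_zmod m).oddFunctionsEquiv)).trans
      (MulEquiv.piCongrRight fun _ => eF)
  refine ⟨H, ?_, ?_, ⟨iso⟩⟩
  · ext u
    exact Subgroup.mem_map_equiv.trans
      (charEvalUnits_mem_oddFunctions_iff (powChar_zero χ) (powChar_neg_apply χ hB) hbij u)
  · rw [Nat.card_congr iso.toEquiv, Nat.card_fun, Nat.card_fin]
    exact congrArg (· ^ m) (Nat.card_zmod _)

theorem stmt3 (p q f : ℕ) (hp : p.Prime) (hq : q.Prime) (hqodd : Odd q)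
    (F : Type*) [Field F] [Fintype F] (hF : Fintype.card F = p ^ f) (hF3 : 3 < p ^ f)
    (hdvd : q ∣ p ^ f - 1)
    (B : Type*) [Group B] [IsCyclic B] (hB : Nat.card B = q) :
    ∃ H : Subgroup (MonoidAlgebra F B)ˣ,
      (H : Set (MonoidAlgebra F B)ˣ) =
        {u | u ∈ normUnits F B ∧ invo F B (u : MonoidAlgebra F B) = ((u⁻¹ : (MonoidAlgebra F B)ˣ) : MonoidAlgebra F B)} ∧
      Nat.card H = (p ^ f - 1) ^ ((q - 1) / 2) ∧
      Nonempty (H ≃* (Fin ((q - 1) / 2) → Multiplicative (ZMod (p ^ f - 1)))) :=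
  stmt3_general p q f hqodd F hF hdvd B hB
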